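/- arXiv:1010.4812 — 4 statements merged into one kernel-verified Lean document; each statement's English description precedes it below -/
import Mathlib

section
/- In the game of the previous context with L = n^M, the state where every player plays B_i has bottleneck congestion 1, the all-A_i Nash equilibrium has bottleneck congestion n, the total number of resources is |R| = nL + 1 = n^(M+1) + 1 (counting e and all private resources), and hence the price of anarchy is at least n = Ω(|R|^(1/(M+1))). -/
/-- Number of players using resource `r` in state `S`. -/
def congestion {P R : Type} [Fintype P] [DecidableEq R] (S : P → Finset R) (r : R) : ℕ :=
  (Finset.univ.filter (fun p => r ∈ S p)).card

/-- Bottleneck (maximum) congestion of a state. -/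
def bottleneck {P R : Type} [Fintype P] [Fintype R] [DecidableEq R]
    (S : P → Finset R) : ℕ :=
  Finset.univ.sup (congestion S)

/-- Strategy A_i: the single shared resource. -/
def stratA (n L : ℕ) (_i : Fin n) : Finset (Option (Fin n × Fin L)) := {none}

/-- Strategy B_i: player i's L private resources (pairwise disjoint across players). -/
def stratB (n L : ℕ) (i : Fin n) : Finset (Option (Fin n × Fin L)) :=
  Finset.univ.image (fun j : Fin L => some (i, j))

open Function

section Congestion

variable {P R : Type} [Fintype P] [DecidableEq R]

theorem congestion_le_card (S : P → Finset R) (r : R) : congestion S r ≤ Fintype.card P :=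
  Finset.card_filter_le _ _

theorem congestion_eq_card_of_forall_mem {S : P → Finset R} {r : R} (h : ∀ p, r ∈ S p) :
    congestion S r = Fintype.card P := by
  simp [congestion, h]

theorem congestion_le_one_of_pairwise_disjoint {S : P → Finset R}
    (hS : Pairwise (Disjoint on S)) (r : R) : congestion S r ≤ 1 :=
  Finset.card_le_one.mpr fun p hp q hq => by
    by_contra hpq
    exact Finset.disjoint_left.mp (hS hpq) (Finset.mem_filter.mp hp).2 (Finset.mem_filter.mp hq).2

theorem one_le_congestion {S : P → Finset R} {r : R} {p : P} (h : r ∈ S p) :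
    1 ≤ congestion S r :=
  Finset.card_pos.mpr ⟨p, Finset.mem_filter.mpr ⟨Finset.mem_univ p, h⟩⟩

variable [Fintype R]

theorem congestion_le_bottleneck (S : P → Finset R) (r : R) :
    congestion S r ≤ bottleneck S :=
  Finset.le_sup (Finset.mem_univ r)

theorem bottleneck_eq_card_of_forall_mem {S : P → Finset R} {r : R} (h : ∀ p, r ∈ S p) :
    bottleneck S = Fintype.card P :=
  le_antisymm (Finset.sup_le fun r _ => congestion_le_card S r)
    ((congestion_eq_card_of_forall_mem h).symm.le.trans (congestion_le_bottleneck S r))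

theorem bottleneck_eq_one_of_pairwise_disjoint {S : P → Finset R}
    (hS : Pairwise (Disjoint on S)) {r : R} {p : P} (h : r ∈ S p) : bottleneck S = 1 :=
  le_antisymm (Finset.sup_le fun r _ => congestion_le_one_of_pairwise_disjoint hS r)
    ((one_le_congestion h).trans (congestion_le_bottleneck S r))

end Congestion

theorem stratB_pairwise_disjoint (n L : ℕ) : Pairwise (Disjoint on stratB n L) := by
  intro i i' hii'
  simp only [onFun, stratB, Finset.disjoint_left, Finset.mem_image]
  rintro _ ⟨j, -, rfl⟩ ⟨j', -, hj'⟩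
  exact hii' (Prod.ext_iff.mp (Option.some_injective _ hj')).1.symm

theorem mem_stratB {n L : ℕ} (i : Fin n) (j : Fin L) : some (i, j) ∈ stratB n L i := by
  simp [stratB]

theorem card_option_fin_prod_fin (n L : ℕ) :
    Fintype.card (Option (Fin n × Fin L)) = n * L + 1 := by
  simp

/-- With L = n^M: the all-B state has bottleneck congestion 1, the all-A Nash
equilibrium has bottleneck congestion n, the number of resources is
|R| = nL + 1 = n^(M+1) + 1, and hence the price of anarchy is at least
n = |R - 1|^(1/(M+1)). -/
theorem stmt_6 (n M : ℕ) (hn : 0 < n) (L : ℕ) (hL : L = n ^ M) :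
    bottleneck (fun i : Fin n => stratB n L i) = 1 ∧
    bottleneck (fun i : Fin n => stratA n L i) = n ∧
    Fintype.card (Option (Fin n × Fin L)) = n ^ (M + 1) + 1 ∧
    ((bottleneck (fun i : Fin n => stratA n L i) : ℝ) /
        (bottleneck (fun i : Fin n => stratB n L i) : ℝ)) =
      ((Fintype.card (Option (Fin n × Fin L)) : ℝ) - 1) ^ ((1 : ℝ) / ((M : ℝ) + 1)) := by
  have hB : bottleneck (fun i : Fin n => stratB n L i) = 1 :=
    bottleneck_eq_one_of_pairwise_disjoint (stratB_pairwise_disjoint n L)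
      (mem_stratB ⟨0, hn⟩ (⟨0, hL ▸ Nat.pow_pos hn⟩ : Fin L))
  have hA : bottleneck (fun i : Fin n => stratA n L i) = n :=
    (bottleneck_eq_card_of_forall_mem (r := none) fun _ => Finset.mem_singleton_self none).trans
      (Fintype.card_fin n)
  have hCard : Fintype.card (Option (Fin n × Fin L)) = n ^ (M + 1) + 1 := by
    rw [card_option_fin_prod_fin, hL, pow_succ']
  refine ⟨hB, hA, hCard, ?_⟩
  rw [hA, hB, hCard, Nat.cast_one, div_one, Nat.cast_add_one, add_sub_cancel_right, Nat.cast_pow,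
    one_div, ← Nat.cast_add_one, Real.pow_rpow_inv_natCast n.cast_nonneg M.succ_ne_zero]
end

section
/- Every finite congestion game with resource delay functions d_r(k) = k^M (player cost = sum of delays of used resources) possesses a pure Nash equilibrium. -/
/-- Cost of player `p` in state `S` with polynomial delays of degree `M`. -/
def playerCost {P R : Type} [Fintype P] [DecidableEq R] (M : ℕ)
    (S : P → Finset R) (p : P) : ℕ :=
  ∑ r ∈ S p, (congestion S r) ^ M

/-- `S` is a pure Nash equilibrium for the strategy sets `strat`. -/
def IsNash {P R : Type} [Fintype P] [DecidableEq P] [DecidableEq R] (M : ℕ)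
    (strat : P → Finset (Finset R)) (S : P → Finset R) : Prop :=
  (∀ p, S p ∈ strat p) ∧
    ∀ p, ∀ T ∈ strat p,
      playerCost M S p ≤ ∑ r ∈ T, (congestion (Function.update S p T) r) ^ M

open Finset Function

theorem update_mem_piFinset {ι : Type*} [Fintype ι] [DecidableEq ι] {β : ι → Type*}
    {s : ∀ i, Finset (β i)} {f : ∀ i, β i} (hf : f ∈ Fintype.piFinset s) {i : ι} {b : β i}
    (hb : b ∈ s i) : update f i b ∈ Fintype.piFinset s := by
  rw [Fintype.mem_piFinset] at hf ⊢
  intro j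
  rcases eq_or_ne j i with rfl | hj
  · rwa [update_self]
  · rw [update_of_ne hj]
    exact hf j

def rosenthalPotential {P R α : Type} [Fintype P] [Fintype R] [DecidableEq R] [AddCommMonoid α]
    (d : ℕ → α) (S : P → Finset R) : α :=
  ∑ r : R, ∑ k ∈ range (congestion S r), d (k + 1)

section

variable {P R : Type} [Fintype P] [DecidableEq P] [DecidableEq R]

theorem congestion_update (S : P → Finset R) (p : P) (T : Finset R) (r : R) :
    congestion (update S p T) r = congestion (update S p ∅) r + if r ∈ T then 1 else 0 := by
  have hothers : ∀ q ∈ univ.erase p,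
      (if r ∈ update S p T q then 1 else 0) = if r ∈ update S p ∅ q then 1 else 0 := by
    intro q hq
    rw [update_of_ne (ne_of_mem_erase hq), update_of_ne (ne_of_mem_erase hq)]
  simp only [congestion, card_filter]
  rw [← add_sum_erase _ _ (mem_univ p), ← add_sum_erase _ _ (mem_univ p), sum_congr rfl hothers,
    update_self, update_self]
  simp only [notMem_empty, if_false, zero_add, add_comm]

variable [Fintype R] {α : Type} [AddCommMonoid α]

theorem rosenthalPotential_eq_update_empty_add (d : ℕ → α) (S : P → Finset R) (p : P) :
    rosenthalPotential d S =
      rosenthalPotential d (update S p ∅) + ∑ r ∈ S p, d (congestion S r) := by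
  rw [rosenthalPotential, rosenthalPotential, ← univ_inter (S p), ← sum_ite_mem,
    ← sum_add_distrib]
  refine sum_congr rfl fun r _ => ?_
  have hcong := congestion_update S p (S p) r
  rw [update_eq_self] at hcong
  rw [hcong]
  split_ifs <;> simp [sum_range_succ]

theorem rosenthalPotential_update_add_cost (d : ℕ → α) (S : P → Finset R) (p : P)
    (T : Finset R) :
    rosenthalPotential d (update S p T) + ∑ r ∈ S p, d (congestion S r) =
      rosenthalPotential d S + ∑ r ∈ T, d (congestion (update S p T) r) := by
  rw [rosenthalPotential_eq_update_empty_add d S p,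
    rosenthalPotential_eq_update_empty_add d (update S p T) p, update_idem, update_self,
    add_right_comm]

end

/-- Rosenthal's theorem for polynomial delays d_r(k) = k^M: every finite
congestion game (each player with a nonempty finite set of pure strategies over
a finite resource set) possesses a pure Nash equilibrium. -/
theorem stmt_7 {P R : Type} [Fintype P] [DecidableEq P] [Fintype R] [DecidableEq R]
    (M : ℕ) (strat : P → Finset (Finset R)) (hne : ∀ p, (strat p).Nonempty) :
    ∃ S : P → Finset R, IsNash M strat S := by
  obtain ⟨S, hS, hmin⟩ := (Fintype.piFinset strat).exists_min_image
    (rosenthalPotential (· ^ M)) (Fintype.piFinset_nonempty.mpr hne)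
  refine ⟨S, Fintype.mem_piFinset.mp hS, fun p T hT => ?_⟩
  have hle := hmin _ (update_mem_piFinset hS hT)
  have hexchange := rosenthalPotential_update_add_cost (· ^ M) S p T
  unfold playerCost
  omega
end

section
/- Let a_1 ≥ a_2 ≥ … ≥ a_k and b_1 ≤ b_2 ≤ … ≤ b_m be nonnegative integers with Σ_{j=1}^m (b_j + 1)^M ≥ Σ_{l=1}^k a_l^M. Then there exists a partition of {1,…,k} into consecutive blocks L_1,…,L_t and an assignment of intervals L*_1,…,L*_t of {1,…,m}, where consecutive intervals overlap in at most one index, such that for every j: Σ_{i ∈ L*_j} (b_i + 1)^M ≥ Σ_{l ∈ L_j} a_l^M, each index of {1,…,m} appears in at most two of the L*_j, and for each j either |L_j| = 1 or |L*_j| = 1. -/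
/-!
Greedy construction, with `w l = a_l ^ M` and `c i = (b_i + 1) ^ M`. A state `(l, q)` means: the
items from `l` on remain, the resources below `q` are closed, resource `q` has been used at most
once, and `∑_{x ≥ l} w x ≤ ∑_{i ≥ q} c i`. A weightless item forms a block with no resources. An
item heavier than `c q` takes the shortest interval `[q, q']` that covers it; it outweighs
`[q, q')`, so `(l + 1, q')` satisfies the invariant. Otherwise a maximal run of items goes on `q`
and the next item `r` alone on `q + 1`: it fits there because `w` decreases and `c` increases, and
since the run together with item `r` outweighs `c q`, the state `(r + 1, q + 1)` satisfies the
invariant. No resource is used by more than two blocks, and consecutive blocks share at most the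
resource `q`.
-/

/-- A set of indices is an interval (order-convex set). -/
def IsInterval {α : Type*} [LinearOrder α] (s : Finset α) : Prop :=
  ∀ x ∈ s, ∀ z ∈ s, ∀ y, x ≤ y → y ≤ z → y ∈ s

open Finset

section IsInterval

variable {α : Type*} [LinearOrder α]

theorem isInterval_empty : IsInterval (∅ : Finset α) := fun _ hx => absurd hx (notMem_empty _)

theorem isInterval_singleton (a : α) : IsInterval ({a} : Finset α) := by
  intro x hx z hz y hxy hyz
  rw [mem_singleton] at hx hz ⊢
  exact le_antisymm (hz ▸ hyz) (hx ▸ hxy)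

theorem isInterval_Ico [LocallyFiniteOrder α] (a b : α) : IsInterval (Ico a b) := by
  intro x hx z hz y hxy hyz
  rw [mem_Ico] at hx hz ⊢
  exact ⟨hx.1.trans hxy, hyz.trans_lt hz.2⟩

theorem IsInterval.preimage {β : Type*} [LinearOrder β] {s : Finset β} (hs : IsInterval s)
    {f : α → β} (hf : Monotone f) (hinj : Set.InjOn f (f ⁻¹' ↑s)) :
    IsInterval (s.preimage f hinj) := by
  intro x hx z hz y hxy hyz
  rw [mem_preimage] at hx hz ⊢
  exact hs _ hx _ hz _ (hf hxy) (hf hyz)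

end IsInterval

section FinPreimage

variable {n : ℕ} {s : Finset ℕ}

theorem card_preimage_val_le :
    (s.preimage Fin.val Fin.val_injective.injOn : Finset (Fin n)).card ≤ s.card :=
  (card_preimage _ _ _).trans_le (card_filter_le _ _)

theorem card_preimage_val (hs : s ⊆ range n) :
    (s.preimage Fin.val Fin.val_injective.injOn : Finset (Fin n)).card = s.card := by
  rw [card_preimage, filter_true_of_mem]
  intro x hx
  exact ⟨⟨x, mem_range.mp (hs hx)⟩, rfl⟩

theorem sum_preimage_val {M : Type*} [AddCommMonoid M] (hs : s ⊆ range n) (g : ℕ → M) :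
    ∑ i ∈ (s.preimage Fin.val Fin.val_injective.injOn : Finset (Fin n)), g i = ∑ x ∈ s, g x :=
  sum_preimage _ _ _ _ fun x hx hx' => absurd ⟨⟨x, mem_range.mp (hs hx)⟩, rfl⟩ hx'

end FinPreimage

theorem List.countP_eq_card_filter_range_getD {α : Type*} (p : α → Prop) [DecidablePred p]
    (bs : List α) (d : α) :
    bs.countP (fun B => decide (p B)) = #{j ∈ Finset.range bs.length | p (bs.getD j d)} := by
  induction bs with
  | nil => simp
  | cons B bs ih =>
    rw [card_filter, List.length_cons, Finset.sum_range_succ']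
    simp only [List.getD_cons_succ, List.getD_cons_zero, List.countP_cons]
    rw [← card_filter, ← ih]
    by_cases hB : p B <;> simp [hB]

theorem lt_of_sum_Ico_ne_zero {f : ℕ → ℕ} {a b : ℕ} (h : ∑ i ∈ Ico a b, f i ≠ 0) : a < b :=
  nonempty_Ico.mp (nonempty_of_sum_ne_zero h)

theorem exists_maximal_sum_Ico_le (f : ℕ → ℕ) {a b C : ℕ} (hab : a < b) (ha : f a ≤ C) :
    ∃ r, a < r ∧ r ≤ b ∧ ∑ i ∈ Ico a r, f i ≤ C ∧ (r < b → C < ∑ i ∈ Ico a (r + 1), f i) := by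
  let P r := ∑ i ∈ Ico a r, f i ≤ C
  have hP : P (a + 1) := by simpa [P] using ha
  set r := Nat.findGreatest P b
  refine ⟨r, Nat.le_findGreatest hab hP, Nat.findGreatest_le b,
    Nat.findGreatest_spec (P := P) hab hP, fun hr => not_le.mp ?_⟩
  exact Nat.findGreatest_is_greatest (k := r + 1) (Nat.lt_succ_self r) hr

theorem exists_minimal_le_sum_Ico (f : ℕ → ℕ) {a b W : ℕ} (hW : 0 < W)
    (hWb : W ≤ ∑ i ∈ Ico a b, f i) :
    ∃ n, a ≤ n ∧ n < b ∧ ∑ i ∈ Ico a n, f i < W ∧ W ≤ ∑ i ∈ Ico a (n + 1), f i := by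
  have hab : a < b := lt_of_sum_Ico_ne_zero (f := f) (by omega)
  have hex : ∃ n, W ≤ ∑ i ∈ Ico a (n + 1), f i := ⟨b - 1, by rwa [Nat.sub_add_cancel (by omega)]⟩
  set n := Nat.find hex
  have hna : a ≤ n := by
    by_contra! h
    have := Nat.find_spec hex
    rw [Ico_eq_empty_of_le (by omega), sum_empty] at this
    omega
  refine ⟨n, hna, ?_, ?_, Nat.find_spec hex⟩
  · have := Nat.find_min' hex (m := b - 1) (by rwa [Nat.sub_add_cancel (by omega)])
    omega
  · rcases hna.eq_or_lt with h | h
    · rw [← h, Ico_self, sum_empty]; exact hW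
    · have := Nat.find_min hex (m := n - 1) (by omega)
      rwa [not_le, Nat.sub_add_cancel (by omega)] at this

def IsBlockPartition {k m : ℕ} (a : Fin k → ℕ) (b : Fin m → ℕ) (t : ℕ)
    (L : ℕ → Finset (Fin k)) (Lstar : ℕ → Finset (Fin m)) : Prop :=
  (∀ i : Fin k, ∃ j < t, i ∈ L j) ∧
  (∀ j₁ < t, ∀ j₂ < t, j₁ ≠ j₂ → Disjoint (L j₁) (L j₂)) ∧
  (∀ j < t, IsInterval (L j)) ∧
  (∀ j < t, IsInterval (Lstar j)) ∧
  (∀ j, j + 1 < t → (Lstar j ∩ Lstar (j + 1)).card ≤ 1) ∧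
  (∀ i : Fin m, ((Finset.range t).filter (fun j => i ∈ Lstar j)).card ≤ 2) ∧
  (∀ j < t, ∑ l ∈ L j, a l ≤ ∑ i ∈ Lstar j, b i) ∧
  (∀ j < t, (L j).card = 1 ∨ (Lstar j).card = 1)

/-- How many more blocks may use resource `x` when the resources below `q` are closed and
resource `q` has `f` uses left. -/
def freeSlots (q f x : ℕ) : ℕ := if x < q then 0 else if x = q then f else 2

theorem freeSlots_le_two {q f x : ℕ} (hf : f ≤ 2) : freeSlots q f x ≤ 2 := by
  unfold freeSlots
  split_ifs <;> omega

variable (k m : ℕ) (w c : ℕ → ℕ)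

/-- A block partition of the items `[l, k)` over the resources `[0, m)`, as the list of pairs
`(L, T)` in item order, within the budget `freeSlots q f`. -/
structure IsBlockList (l q f : ℕ) (bs : List (Finset ℕ × Finset ℕ)) : Prop where
  fst_subset : ∀ B ∈ bs, B.1 ⊆ Ico l k
  snd_subset : ∀ B ∈ bs, B.2 ⊆ range m
  isInterval_fst : ∀ B ∈ bs, IsInterval B.1
  isInterval_snd : ∀ B ∈ bs, IsInterval B.2
  sum_le : ∀ B ∈ bs, ∑ x ∈ B.1, w x ≤ ∑ x ∈ B.2, c x
  card_eq_one : ∀ B ∈ bs, #B.1 = 1 ∨ #B.2 = 1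
  cover : ∀ x ∈ Ico l k, ∃ B ∈ bs, x ∈ B.1
  pairwise_disjoint : bs.Pairwise fun B B' => Disjoint B.1 B'.1
  isChain : bs.IsChain fun B B' => #(B.2 ∩ B'.2) ≤ 1
  countP_le : ∀ x, bs.countP (fun B => x ∈ B.2) ≤ freeSlots q f x

variable {k m w c}

namespace IsBlockList

theorem nil {l q f : ℕ} (h : k ≤ l) : IsBlockList k m w c l q f [] where
  fst_subset := by simp
  snd_subset := by simp
  isInterval_fst := by simp
  isInterval_snd := by simp
  sum_le := by simp
  card_eq_one := by simp
  cover x hx := by rw [mem_Ico] at hx; omega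
  pairwise_disjoint := List.Pairwise.nil
  isChain := List.isChain_nil
  countP_le x := by simp

theorem le_of_mem {l q f : ℕ} {bs : List (Finset ℕ × Finset ℕ)} (h : IsBlockList k m w c l q f bs)
    {B : Finset ℕ × Finset ℕ} (hB : B ∈ bs) {x : ℕ} (hx : x ∈ B.2) : q ≤ x := by
  have hpos : 0 < bs.countP (fun B => x ∈ B.2) := List.countP_pos_iff.mpr ⟨B, hB, by simpa⟩
  have := (h.countP_le x).trans_lt' hpos
  unfold freeSlots at this
  split_ifs at this <;> omega

theorem cons {l l' q q' f f' : ℕ} {T : Finset ℕ} {bs : List (Finset ℕ × Finset ℕ)}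
    (h : IsBlockList k m w c l' q' f' bs) (hll' : l ≤ l') (hl'k : l' ≤ k) (hTm : T ⊆ range m)
    (hT : IsInterval T) (hTq' : ∀ x ∈ T, x ≤ q') (hsum : ∑ x ∈ Ico l l', w x ≤ ∑ x ∈ T, c x)
    (hcard : #(Ico l l') = 1 ∨ #T = 1)
    (hslots : ∀ x, (if x ∈ T then 1 else 0) + freeSlots q' f' x ≤ freeSlots q f x) :
    IsBlockList k m w c l q f ((Ico l l', T) :: bs) where
  fst_subset := List.forall_mem_cons.mpr ⟨Ico_subset_Ico_right hl'k,
    fun B hB => (h.fst_subset B hB).trans (Ico_subset_Ico_left hll')⟩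
  snd_subset := List.forall_mem_cons.mpr ⟨hTm, h.snd_subset⟩
  isInterval_fst := List.forall_mem_cons.mpr ⟨isInterval_Ico l l', h.isInterval_fst⟩
  isInterval_snd := List.forall_mem_cons.mpr ⟨hT, h.isInterval_snd⟩
  sum_le := List.forall_mem_cons.mpr ⟨hsum, h.sum_le⟩
  card_eq_one := List.forall_mem_cons.mpr ⟨hcard, h.card_eq_one⟩
  cover x hx := by
    by_cases hxl' : x < l'
    · exact ⟨_, List.mem_cons_self, mem_Ico.mpr ⟨(mem_Ico.mp hx).1, hxl'⟩⟩
    · obtain ⟨B, hB, hxB⟩ := h.cover x (mem_Ico.mpr ⟨not_lt.mp hxl', (mem_Ico.mp hx).2⟩)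
      exact ⟨B, List.mem_cons_of_mem _ hB, hxB⟩
  pairwise_disjoint := by
    refine List.pairwise_cons.mpr ⟨fun B hB => disjoint_left.mpr fun x hx hxB => ?_,
      h.pairwise_disjoint⟩
    exact absurd (mem_Ico.mp hx).2 (not_lt.mpr (mem_Ico.mp (h.fst_subset B hB hxB)).1)
  isChain := by
    refine h.isChain.cons fun B hB => card_le_one.mpr fun x hx y hy => ?_
    have hB' := List.mem_of_mem_head? hB
    rw [mem_inter] at hx hy
    have := hTq' x hx.1; have := hTq' y hy.1
    have := h.le_of_mem hB' hx.2; have := h.le_of_mem hB' hy.2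
    omega
  countP_le x := by
    simp only [List.countP_cons, decide_eq_true_eq]
    rw [add_comm]
    exact (Nat.add_le_add_left (h.countP_le x) _).trans (hslots x)

theorem exists_isBlockPartition {q : ℕ} {bs : List (Finset ℕ × Finset ℕ)}
    (h : IsBlockList k m w c 0 q 1 bs) (a : Fin k → ℕ) (b : Fin m → ℕ)
    (ha : ∀ i, a i = w i) (hb : ∀ i, b i = c i) :
    ∃ t L Lstar, IsBlockPartition a b t L Lstar := by
  set B : ℕ → Finset ℕ × Finset ℕ := fun j => bs.getD j (∅, ∅)
  have hBj : ∀ j (hj : j < bs.length), B j = bs[j] := fun j hj => List.getD_eq_getElem _ _ hj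
  have hB : ∀ j < bs.length, B j ∈ bs := fun j hj => hBj j hj ▸ List.getElem_mem hj
  have hfst : ∀ j < bs.length, (B j).1 ⊆ range k := fun j hj =>
    (h.fst_subset _ (hB j hj)).trans (by simp)
  refine ⟨bs.length, fun j => (B j).1.preimage Fin.val Fin.val_injective.injOn,
    fun j => (B j).2.preimage Fin.val Fin.val_injective.injOn, ?_, ?_, ?_, ?_, ?_, ?_, ?_, ?_⟩
  · intro i
    obtain ⟨_, hBbs, hiB⟩ := h.cover i (by simp)
    obtain ⟨j, hj, rfl⟩ := List.mem_iff_getElem.mp hBbs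
    exact ⟨j, hj, by rwa [mem_preimage, hBj j hj]⟩
  · intro j₁ hj₁ j₂ hj₂ hne
    refine disjoint_preimage ?_
    rw [hBj j₁ hj₁, hBj j₂ hj₂]
    have hpw := List.pairwise_iff_getElem.mp h.pairwise_disjoint
    rcases hne.lt_or_gt with h₁₂ | h₂₁
    · exact hpw j₁ j₂ hj₁ hj₂ h₁₂
    · exact (hpw j₂ j₁ hj₂ hj₁ h₂₁).symm
  · exact fun j hj => (h.isInterval_fst _ (hB j hj)).preimage Fin.val_strictMono.monotone _
  · exact fun j hj => (h.isInterval_snd _ (hB j hj)).preimage Fin.val_strictMono.monotone _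
  · intro j hj
    rw [← preimage_inter]
    refine card_preimage_val_le.trans ?_
    rw [hBj j (Nat.lt_of_succ_lt hj), hBj (j + 1) hj]
    exact List.isChain_iff_getElem.mp h.isChain j hj
  · intro i
    have hcount := h.countP_le i
    rw [List.countP_eq_card_filter_range_getD (fun B => (i : ℕ) ∈ B.2) bs (∅, ∅)] at hcount
    simp only [mem_preimage]
    exact hcount.trans (freeSlots_le_two one_le_two)
  · intro j hj
    simp only [ha, hb]
    rw [sum_preimage_val (hfst j hj), sum_preimage_val (h.snd_subset _ (hB j hj))]
    exact h.sum_le _ (hB j hj)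
  · intro j hj
    rw [card_preimage_val (hfst j hj), card_preimage_val (h.snd_subset _ (hB j hj))]
    exact h.card_eq_one _ (hB j hj)

end IsBlockList

section Construction

variable {l q : ℕ}

theorem exists_isBlockList_of_eq_zero (hlk : l < k) (hzero : w l = 0)
    (hsum : ∑ x ∈ Ico l k, w x ≤ ∑ x ∈ Ico q m, c x)
    (ih : ∀ l' q', l < l' → ∑ x ∈ Ico l' k, w x ≤ ∑ x ∈ Ico q' m, c x →
      ∃ bs, IsBlockList k m w c l' q' 1 bs) :
    ∃ bs, IsBlockList k m w c l q 1 bs := by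
  have hsplit := sum_eq_sum_Ico_succ_bot hlk w
  obtain ⟨bs, hbs⟩ := ih (l + 1) q (Nat.lt_succ_self l) (by omega)
  exact ⟨_, hbs.cons (T := ∅) (Nat.le_succ l) hlk (empty_subset _) isInterval_empty (by simp)
    (by simp [hzero]) (.inl (by simp)) (by simp)⟩

theorem exists_isBlockList_of_lt (hlk : l < k) (hlt : c q < w l)
    (hsum : ∑ x ∈ Ico l k, w x ≤ ∑ x ∈ Ico q m, c x)
    (ih : ∀ l' q', l < l' → ∑ x ∈ Ico l' k, w x ≤ ∑ x ∈ Ico q' m, c x →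
      ∃ bs, IsBlockList k m w c l' q' 1 bs) :
    ∃ bs, IsBlockList k m w c l q 1 bs := by
  have hsplit := sum_eq_sum_Ico_succ_bot hlk w
  have hwl : w l ≤ ∑ x ∈ Ico q m, c x := by omega
  obtain ⟨q', hqq', hq'm, hlt', hle⟩ :=
    exists_minimal_le_sum_Ico c (hlt.trans_le' (Nat.zero_le _)) hwl
  replace hqq' : q < q' := by
    refine hqq'.lt_of_ne ?_
    rintro rfl
    rw [Nat.Ico_succ_singleton, sum_singleton] at hle
    omega
  have hq'split := sum_Ico_consecutive c hqq'.le hq'm.le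
  obtain ⟨bs, hbs⟩ := ih (l + 1) q' (Nat.lt_succ_self l) (by omega)
  refine ⟨_, hbs.cons (Nat.le_succ l) hlk (fun x hx => ?_) (isInterval_Ico _ _) (fun x hx => ?_)
    (by simpa using hle) (.inl (by simp)) fun x => ?_⟩
  · rw [mem_Ico] at hx; rw [mem_range]; omega
  · rw [mem_Ico] at hx; omega
  · simp only [mem_Ico, freeSlots]
    split_ifs <;> omega

theorem exists_isBlockList_of_le (hw : AntitoneOn w (Set.Iio k)) (hc : MonotoneOn c (Set.Iio m))
    (hlk : l < k) (hpos : 0 < w l) (hle : w l ≤ c q)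
    (hsum : ∑ x ∈ Ico l k, w x ≤ ∑ x ∈ Ico q m, c x)
    (ih : ∀ l' q', l < l' → ∑ x ∈ Ico l' k, w x ≤ ∑ x ∈ Ico q' m, c x →
      ∃ bs, IsBlockList k m w c l' q' 1 bs) :
    ∃ bs, IsBlockList k m w c l q 1 bs := by
  have hqm : q < m := by
    have := single_le_sum (fun x _ => Nat.zero_le (w x)) (left_mem_Ico.mpr hlk)
    exact lt_of_sum_Ico_ne_zero (f := c) (by omega)
  obtain ⟨r, hlr, hrk, hrun, hmax⟩ := exists_maximal_sum_Ico_le w hlk hle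
  have hrest : ∃ bs, IsBlockList k m w c r (q + 1) 2 bs := by
    rcases hrk.lt_or_eq with hrk | rfl
    · have hover := hmax hrk
      rw [sum_Ico_succ_top hlr.le] at hover
      have hsplit := sum_Ico_consecutive w hlr.le hrk.le
      have hrsplit := sum_eq_sum_Ico_succ_bot hrk w
      have hcsplit := sum_eq_sum_Ico_succ_bot hqm c
      have hinv : ∑ x ∈ Ico (r + 1) k, w x < ∑ x ∈ Ico (q + 1) m, c x := by omega
      have hq1m : q + 1 < m := lt_of_sum_Ico_ne_zero (f := c) (by omega)
      have hwr : w r ≤ c (q + 1) :=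
        calc w r ≤ w l := hw (Set.mem_Iio.mpr hlk) (Set.mem_Iio.mpr hrk) hlr.le
          _ ≤ c q := hle
          _ ≤ c (q + 1) := hc (Set.mem_Iio.mpr hqm) (Set.mem_Iio.mpr hq1m) (Nat.le_succ q)
      obtain ⟨bs, hbs⟩ := ih (r + 1) (q + 1) (by omega) hinv.le
      refine ⟨_, hbs.cons (Nat.le_succ r) hrk (by simpa using hq1m) (isInterval_singleton _)
        (by simp) (by simpa using hwr) (.inr (card_singleton _)) fun x => ?_⟩
      simp only [mem_singleton, freeSlots]
      split_ifs <;> omega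
    · exact ⟨[], .nil le_rfl⟩
  obtain ⟨bs, hbs⟩ := hrest
  refine ⟨_, hbs.cons hlr.le hrk (by simpa using hqm) (isInterval_singleton _) (by simp)
    (by simpa using hrun) (.inr (card_singleton _)) fun x => ?_⟩
  simp only [mem_singleton, freeSlots]
  split_ifs <;> omega

theorem exists_isBlockList (hw : AntitoneOn w (Set.Iio k)) (hc : MonotoneOn c (Set.Iio m))
    (l q : ℕ) (hsum : ∑ x ∈ Ico l k, w x ≤ ∑ x ∈ Ico q m, c x) :
    ∃ bs, IsBlockList k m w c l q 1 bs := by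
  by_cases hlk : k ≤ l
  · exact ⟨[], .nil hlk⟩
  push Not at hlk
  have ih : ∀ l' q', l < l' → ∑ x ∈ Ico l' k, w x ≤ ∑ x ∈ Ico q' m, c x →
      ∃ bs, IsBlockList k m w c l' q' 1 bs :=
    fun l' q' _ => exists_isBlockList hw hc l' q'
  rcases Nat.eq_zero_or_pos (w l) with hzero | hpos
  · exact exists_isBlockList_of_eq_zero hlk hzero hsum ih
  rcases le_or_gt (w l) (c q) with hle | hlt
  · exact exists_isBlockList_of_le hw hc hlk hpos hle hsum ih
  · exact exists_isBlockList_of_lt hlk hlt hsum ih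
termination_by k - l

end Construction

theorem exists_isBlockPartition (k m : ℕ) (a : Fin k → ℕ) (b : Fin m → ℕ) (ha : Antitone a)
    (hb : Monotone b) (hsum : ∑ i, a i ≤ ∑ i, b i) :
    ∃ t L Lstar, IsBlockPartition a b t L Lstar := by
  set w : ℕ → ℕ := fun x => if hx : x < k then a ⟨x, hx⟩ else 0
  set c : ℕ → ℕ := fun x => if hx : x < m then b ⟨x, hx⟩ else 0
  have hw : AntitoneOn w (Set.Iio k) := fun x hx y hy hxy => by
    simpa [w, Set.mem_Iio.mp hx, Set.mem_Iio.mp hy] using ha (Fin.mk_le_mk.mpr hxy)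
  have hc : MonotoneOn c (Set.Iio m) := fun x hx y hy hxy => by
    simpa [c, Set.mem_Iio.mp hx, Set.mem_Iio.mp hy] using hb (Fin.mk_le_mk.mpr hxy)
  have hsum' : ∑ x ∈ Ico 0 k, w x ≤ ∑ x ∈ Ico 0 m, c x := by
    simpa [w, c, ← range_eq_Ico, ← Fin.sum_univ_eq_sum_range] using hsum
  obtain ⟨bs, hbs⟩ := exists_isBlockList hw hc 0 0 hsum'
  exact hbs.exists_isBlockPartition a b (fun i => by simp [w]) (fun i => by simp [c])

theorem stmt_9_general (k m M : ℕ)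
    (a : Fin k → ℕ) (b : Fin m → ℕ)
    (ha : ∀ i j : Fin k, i ≤ j → a j ≤ a i)
    (hb : ∀ i j : Fin m, i ≤ j → b i ≤ b j)
    (hsum : ∑ l, (a l) ^ M ≤ ∑ j, (b j + 1) ^ M) :
    ∃ (t : ℕ) (L : ℕ → Finset (Fin k)) (Lstar : ℕ → Finset (Fin m)),
      -- the L_j form a partition of {1,…,k} into consecutive blocks:
      (∀ i : Fin k, ∃ j < t, i ∈ L j) ∧
      (∀ j₁ < t, ∀ j₂ < t, j₁ ≠ j₂ → Disjoint (L j₁) (L j₂)) ∧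
      (∀ j < t, IsInterval (L j)) ∧
      -- the L*_j are intervals of {1,…,m}:
      (∀ j < t, IsInterval (Lstar j)) ∧
      -- consecutive intervals overlap in at most one index:
      (∀ j, j + 1 < t → (Lstar j ∩ Lstar (j + 1)).card ≤ 1) ∧
      -- each index of {1,…,m} appears in at most two of the L*_j:
      (∀ i : Fin m, ((Finset.range t).filter (fun j => i ∈ Lstar j)).card ≤ 2) ∧
      -- dominating sums:
      (∀ j < t, ∑ l ∈ L j, (a l) ^ M ≤ ∑ i ∈ Lstar j, (b i + 1) ^ M) ∧
      -- each block is a singleton on one side: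
      (∀ j < t, (L j).card = 1 ∨ (Lstar j).card = 1) :=
  exists_isBlockPartition k m (fun l => a l ^ M) (fun j => (b j + 1) ^ M)
    (fun i j hij => Nat.pow_le_pow_left (ha i j hij) M)
    (fun i j hij => Nat.pow_le_pow_left (Nat.add_le_add_right (hb i j hij) 1) M) hsum

/-- PMS-Partition (abstraction of Lemma 3.3): given a_1 ≥ … ≥ a_k and
b_1 ≤ … ≤ b_m nonnegative integers with Σ (b_j + 1)^M ≥ Σ a_l^M, there is a
partition of {1,…,k} into consecutive blocks L_1,…,L_t and intervals
L*_1,…,L*_t of {1,…,m}, consecutive L*'s overlapping in at most one index and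
each index appearing in at most two of the L*_j, such that for every j
Σ_{i ∈ L*_j} (b_i + 1)^M ≥ Σ_{l ∈ L_j} a_l^M and either |L_j| = 1 or |L*_j| = 1. -/
theorem stmt_9 (k m M : ℕ) (hM : 1 ≤ M)
    (a : Fin k → ℕ) (b : Fin m → ℕ)
    (ha : ∀ i j : Fin k, i ≤ j → a j ≤ a i)
    (hb : ∀ i j : Fin m, i ≤ j → b i ≤ b j)
    (hsum : ∑ l, (a l) ^ M ≤ ∑ j, (b j + 1) ^ M) :
    ∃ (t : ℕ) (L : ℕ → Finset (Fin k)) (Lstar : ℕ → Finset (Fin m)),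
      -- the L_j form a partition of {1,…,k} into consecutive blocks:
      (∀ i : Fin k, ∃ j < t, i ∈ L j) ∧
      (∀ j₁ < t, ∀ j₂ < t, j₁ ≠ j₂ → Disjoint (L j₁) (L j₂)) ∧
      (∀ j < t, IsInterval (L j)) ∧
      -- the L*_j are intervals of {1,…,m}:
      (∀ j < t, IsInterval (Lstar j)) ∧
      -- consecutive intervals overlap in at most one index:
      (∀ j, j + 1 < t → (Lstar j ∩ Lstar (j + 1)).card ≤ 1) ∧
      -- each index of {1,…,m} appears in at most two of the L*_j:
      (∀ i : Fin m, ((Finset.range t).filter (fun j => i ∈ Lstar j)).card ≤ 2) ∧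
      -- dominating sums:
      (∀ j < t, ∑ l ∈ L j, (a l) ^ M ≤ ∑ i ∈ Lstar j, (b i + 1) ^ M) ∧
      -- each block is a singleton on one side:
      (∀ j < t, (L j).card = 1 ∨ (Lstar j).card = 1) :=
  stmt_9_general k m M a b ha hb hsum
end

section
/- Suppose x is a resource with congestion C_x > ψ where ψ = max(2M, 3C*), and every player π on x (there are C_x of them) has an alternative strategy S*_π with x possibly in it, such that at least C_x − C* of these players satisfy Σ_{y ∈ S*_π} (C_y + 1)^M ≥ C_x^M, each alternative resource y satisfies either C_y > ψ (type V_1) or C_y ≤ ψ (type V_2), and each resource appears in at most C* of the sets S*_π. Then Σ_{y ∈ Ch(x) ∩ V_1} C_y^M + Σ_{y ∈ Ch(x) ∩ V_2} ψ^M ≥ ((C_x − C*)/(2C*)) · C_x^M, where Ch(x) = ∪_π S*_π. -/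
/-!
Bernoulli's inequality for `(1 - 1/(c+1))^M` gives `(c+1)^M ≤ 2 c^M` whenever `c ≥ 2M`; as
`ψ ≥ 2M`, this yields `(C_y+1)^M ≤ 2 (max C_y ψ)^M` for every resource `y`. So each of the
at least `C_x − C*` good players gets `C_x^M ≤ 2 Σ_{y ∈ S*_π} (max C_y ψ)^M`, and summing over
them counts every resource of `Ch(x)` at most `C*` times.
-/

open Finset

lemma add_one_pow_le_two_mul_pow {M n : ℕ} (h : 2 * M ≤ n) : (n + 1) ^ M ≤ 2 * n ^ M := by
  have hpos : (0 : ℝ) < n + 1 := by positivity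
  have hMn : (2 * M : ℝ) ≤ n := by exact_mod_cast h
  have hbern : 1 + M * (-(1 / ((n : ℝ) + 1))) ≤ (1 + -(1 / ((n : ℝ) + 1))) ^ M :=
    one_add_mul_le_pow (by rw [neg_le_neg_iff, div_le_iff₀ hpos]; linarith) M
  have hhalf : (1 / 2 : ℝ) ≤ ((n : ℝ) / (n + 1)) ^ M := by
    have hfrac : (1 : ℝ) + -(1 / ((n : ℝ) + 1)) = n / (n + 1) := by field_simp; ring
    have hsmall : (M : ℝ) * (1 / ((n : ℝ) + 1)) ≤ 1 / 2 := by
      rw [mul_one_div, div_le_div_iff₀ hpos two_pos]; linarith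
    rw [hfrac] at hbern
    linarith
  rw [div_pow, le_div_iff₀ (pow_pos hpos M)] at hhalf
  exact_mod_cast (by linarith : ((n : ℝ) + 1) ^ M ≤ 2 * (n : ℝ) ^ M)

lemma add_one_pow_le_two_mul_max_pow {M ψ : ℕ} (hψ : 2 * M ≤ ψ) (c : ℕ) :
    (c + 1) ^ M ≤ 2 * max c ψ ^ M :=
  calc (c + 1) ^ M ≤ (max c ψ + 1) ^ M := by gcongr; exact le_max_left c ψ
    _ ≤ 2 * max c ψ ^ M := add_one_pow_le_two_mul_pow (hψ.trans (le_max_right c ψ))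

lemma le_two_mul_sum_max_pow {α : Type*} {M ψ a : ℕ} (hψ : 2 * M ≤ ψ) {s : Finset α}
    {C : α → ℕ} (h : a ≤ ∑ y ∈ s, (C y + 1) ^ M) :
    a ≤ 2 * ∑ y ∈ s, max (C y) ψ ^ M := by
  rw [mul_sum]
  exact h.trans (sum_le_sum fun y _ => add_one_pow_le_two_mul_max_pow hψ (C y))

lemma sum_sum_le_nsmul_sum_biUnion {ι α β : Type*} [DecidableEq α] [AddCommMonoid β]
    [PartialOrder β] [IsOrderedAddMonoid β] {s t : Finset ι} (hst : s ⊆ t) (S : ι → Finset α)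
    {f : α → β} (hf : ∀ y, 0 ≤ f y) {k : ℕ} (hk : ∀ y, #{i ∈ t | y ∈ S i} ≤ k) :
    ∑ i ∈ s, ∑ y ∈ S i, f y ≤ k • ∑ y ∈ t.biUnion S, f y := by
  have hswap : ∑ i ∈ s, ∑ y ∈ S i, f y = ∑ y ∈ s.biUnion S, #{i ∈ s | y ∈ S i} • f y := by
    rw [sum_comm' (t' := s.biUnion S) (s' := fun y => {i ∈ s | y ∈ S i})]
    · simp only [sum_const]
    · intro i y
      simp only [mem_filter, mem_biUnion]
      exact ⟨fun h => ⟨⟨h.1, h.2⟩, i, h⟩, fun h => h.1⟩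
  rw [hswap, smul_sum]
  calc ∑ y ∈ s.biUnion S, #{i ∈ s | y ∈ S i} • f y
      ≤ ∑ y ∈ s.biUnion S, k • f y := sum_le_sum fun y _ =>
        nsmul_le_nsmul_left (hf y) ((card_le_card (filter_subset_filter _ hst)).trans (hk y))
    _ ≤ ∑ y ∈ t.biUnion S, k • f y :=
        sum_le_sum_of_subset_of_nonneg (biUnion_subset_biUnion_of_subset_left S hst)
          fun y _ _ => nsmul_nonneg (hf y) k

lemma sub_mul_pow_le_two_mul_sum_max_pow {R Pl : Type*} [DecidableEq R] [Fintype Pl]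
    {M Cstar ψ : ℕ} (hψ : 2 * M ≤ ψ) (C : R → ℕ) (x : R) (Sstar : Pl → Finset R)
    (hmany : C x - Cstar ≤ #{π | C x ^ M ≤ ∑ y ∈ Sstar π, (C y + 1) ^ M})
    (hmult : ∀ y, #{π | y ∈ Sstar π} ≤ Cstar) :
    (C x - Cstar) * C x ^ M ≤ 2 * Cstar * ∑ y ∈ univ.biUnion Sstar, max (C y) ψ ^ M := by
  set G : Finset Pl := {π | C x ^ M ≤ ∑ y ∈ Sstar π, (C y + 1) ^ M}
  calc (C x - Cstar) * C x ^ M ≤ #G * C x ^ M := Nat.mul_le_mul_right _ hmany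
    _ ≤ ∑ π ∈ G, 2 * ∑ y ∈ Sstar π, max (C y) ψ ^ M := by
        rw [← smul_eq_mul]
        exact card_nsmul_le_sum _ _ _ fun π hπ => le_two_mul_sum_max_pow hψ (mem_filter.1 hπ).2
    _ ≤ 2 * (Cstar * ∑ y ∈ univ.biUnion Sstar, max (C y) ψ ^ M) := by
        rw [← mul_sum, ← smul_eq_mul Cstar]
        gcongr
        exact sum_sum_le_nsmul_sum_biUnion (subset_univ G) Sstar (fun _ => Nat.zero_le _) hmult
    _ = 2 * Cstar * ∑ y ∈ univ.biUnion Sstar, max (C y) ψ ^ M := (mul_assoc _ _ _).symm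

lemma sum_comp_max_eq_sum_filter_add_sum_filter {α β γ : Type*} [LinearOrder β]
    [AddCommMonoid γ] (s : Finset α) (g : α → β) (a : β) (h : β → γ) :
    ∑ y ∈ s, h (max (g y) a) = ∑ y ∈ s with a < g y, h (g y) + ∑ y ∈ s with g y ≤ a, h a := by
  rw [← sum_filter_add_sum_filter_not s (fun y => a < g y)]
  congr 1
  · exact sum_congr rfl fun y hy => by rw [max_eq_left (mem_filter.1 hy).2.le]
  · simp only [not_lt]
    exact sum_congr rfl fun y hy => by rw [max_eq_right (mem_filter.1 hy).2]

theorem stmt_10_general {R : Type*} [DecidableEq R] {Pl : Type*} [Fintype Pl]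
    (M Cstar : ℕ)
    (ψ : ℕ) (hψ : ψ = max (2 * M) (3 * Cstar))
    (C : R → ℕ) (x : R)
    (Sstar : Pl → Finset R)
    (hmany : C x - Cstar ≤
      (Finset.univ.filter
        (fun π : Pl => (C x) ^ M ≤ ∑ y ∈ Sstar π, (C y + 1) ^ M)).card)
    (hmult : ∀ y : R, (Finset.univ.filter (fun π : Pl => y ∈ Sstar π)).card ≤ Cstar) :
    (∑ y ∈ (Finset.univ.biUnion Sstar).filter (fun y => ψ < C y), ((C y : ℝ)) ^ M)
      + (∑ y ∈ (Finset.univ.biUnion Sstar).filter (fun y => C y ≤ ψ), ((ψ : ℝ)) ^ M)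
      ≥ (((C x : ℝ) - (Cstar : ℝ)) / (2 * (Cstar : ℝ))) * ((C x : ℝ)) ^ M := by
  have hcount := sub_mul_pow_le_two_mul_sum_max_pow (hψ ▸ le_max_left _ _) C x Sstar hmany hmult
  rw [ge_iff_le, ← sum_comp_max_eq_sum_filter_add_sum_filter _ C ψ (fun n => (n : ℝ) ^ M),
    div_mul_eq_mul_div]
  refine div_le_of_le_mul₀ (by positivity) (by positivity) ?_
  calc ((C x : ℝ) - Cstar) * C x ^ M ≤ ((C x - Cstar : ℕ) : ℝ) * C x ^ M := by
        gcongr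
        exact sub_le_iff_le_add.2 (by exact_mod_cast le_tsub_add)
    _ ≤ 2 * Cstar * ∑ y ∈ univ.biUnion Sstar, ((max (C y) ψ : ℕ) : ℝ) ^ M := by
        exact_mod_cast hcount
    _ = _ := mul_comm _ _

/-- Expansion lemma (Lemma 4.1): let x be a resource with congestion C_x > ψ,
ψ = max(2M, 3C*), whose players π (indexed by a finite type Pl with |Pl| = C_x)
have alternative strategies S*_π; at least C_x − C* of the players satisfy
Σ_{y ∈ S*_π} (C_y + 1)^M ≥ C_x^M, and every resource lies in at most C* of the
sets S*_π.  With Ch(x) = ∪_π S*_π, V₁ = {y : C_y > ψ}, V₂ = {y : C_y ≤ ψ}: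
Σ_{y ∈ Ch(x) ∩ V₁} C_y^M + Σ_{y ∈ Ch(x) ∩ V₂} ψ^M ≥ ((C_x − C*)/(2C*))·C_x^M. -/
theorem stmt_10 {R : Type*} [DecidableEq R] {Pl : Type*} [Fintype Pl] [DecidableEq Pl]
    (M Cstar : ℕ) (hM : 0 < M) (hCstar : 0 < Cstar)
    (ψ : ℕ) (hψ : ψ = max (2 * M) (3 * Cstar))
    (C : R → ℕ) (x : R) (hx : ψ < C x)
    (Sstar : Pl → Finset R) (hcard : Fintype.card Pl = C x)
    (hmany : C x - Cstar ≤
      (Finset.univ.filter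
        (fun π : Pl => (C x) ^ M ≤ ∑ y ∈ Sstar π, (C y + 1) ^ M)).card)
    (hmult : ∀ y : R, (Finset.univ.filter (fun π : Pl => y ∈ Sstar π)).card ≤ Cstar) :
    (∑ y ∈ (Finset.univ.biUnion Sstar).filter (fun y => ψ < C y), ((C y : ℝ)) ^ M)
      + (∑ y ∈ (Finset.univ.biUnion Sstar).filter (fun y => C y ≤ ψ), ((ψ : ℝ)) ^ M)
      ≥ (((C x : ℝ) - (Cstar : ℝ)) / (2 * (Cstar : ℝ))) * ((C x : ℝ)) ^ M :=
  stmt_10_general M Cstar ψ hψ C x Sstar hmany hmult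
end
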